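/- Let X be a compact metric space, let P^fin(X) denote the set of finitely supported Borel probability measures on X with the topology of weak convergence, let U ⊆ P^fin(X) with the subspace topology, and let Q(X,U) = {(x,μ) ∈ X × U : x ∈ supp(μ)} with the subspace topology of the product. Suppose H : Q(X,U) × [0,1] → X is a continuous map which is a support homotopy in U, i.e. for every t ∈ [0,1] and every μ = Σ_{i=1}^n a_i·δ_{x_i} ∈ U with a_i > 0 for all i, the measure Σ_{i=1}^n a_i·δ_{H(x_i,μ,t)} lies in U. Then the map H̃ : U × [0,1] → U given by H̃(μ,t) = Σ_{i=1}^n a_i·δ_{H(x_i,μ,t)} for μ = Σ_{i=1}^n a_i·δ_{x_i} with all a_i > 0 is well-defined and continuous. -/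

import Mathlib

open MeasureTheory Metric Filter
open scoped unitInterval NNReal

noncomputable section

/-- The set of atoms of a probability measure. -/
def suppSet {X : Type*} [MeasurableSpace X] (μ : ProbabilityMeasure X) : Set X :=
  {x | μ {x} ≠ 0}

/-- Finitely supported Borel probability measures, topologized as a subspace of the
space of Borel probability measures with the topology of weak convergence. -/
abbrev Pfin (X : Type*) [MeasurableSpace X] : Type _ :=
  {μ : ProbabilityMeasure X // ∃ S : Finset X, μ (↑S : Set X) = 1}

/-! For `μ = ∑ aᵢ δ_{xᵢ}` with all `aᵢ > 0` the points `xᵢ` are exactly the atoms of `μ`, so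
`H̃(μ, t)` is the image of `μ` under `y ↦ H(y, μ, t)` and does not depend on the representation.
For continuity at `(μ₀, t₀)`, test against a bounded continuous `f`; then
`∫ f dH̃(μ, t) = ∫ f (H(y, μ, t)) dμ(y)`. Replace the integrand by a Tietze extension `φ` of its
values at the finitely many atoms of `μ₀`: `∫ φ dμ → ∫ φ dμ₀` by weak convergence, and the error
is small because on a neighbourhood `O` of the atoms of `μ₀` the integrand stays close to `φ` by
continuity of `H`, while `μ(Oᶜ)` is small by the portmanteau theorem. -/

open Topology Set

section

variable {X E : Type*} [MeasurableSpace X] [MeasurableSingletonClass X] [NormedAddCommGroup E]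

lemma integrable_finsetSum_smul_dirac {ι : Type*} (s : Finset ι) (w : ι → ℝ≥0) (x : ι → X)
    (f : X → E) : Integrable f (∑ i ∈ s, w i • Measure.dirac (x i)) :=
  (integrable_finsetSum_measure).2 fun _ _ => (integrable_dirac (by simp)).smul_measure_nnreal

lemma integral_finsetSum_smul_dirac [NormedSpace ℝ E] [CompleteSpace E] {ι : Type*}
    (s : Finset ι) (w : ι → ℝ≥0) (x : ι → X) (f : X → E) :
    ∫ z, f z ∂(∑ i ∈ s, w i • Measure.dirac (x i)) = ∑ i ∈ s, w i • f (x i) := by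
  rw [integral_finsetSum_measure fun i _ => (integrable_dirac (by simp)).smul_measure_nnreal]
  simp [integral_smul_nnreal_measure]

end

lemma continuousOn_dite_of_continuous {α β : Type*} [TopologicalSpace α] [TopologicalSpace β]
    {s : Set α} [DecidablePred (· ∈ s)] {f : s → β} (hf : Continuous f) (g : α → β) :
    ContinuousOn (fun a => if h : a ∈ s then f ⟨a, h⟩ else g a) s := by
  rw [continuousOn_iff_continuous_domRestrict]
  exact hf.congr fun a => by simp [a.2]

open BoundedContinuousFunction in
lemma exists_boundedContinuous_eqOn_finset {X : Type*} [TopologicalSpace X] [T1Space X]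
    [NormalSpace X] (S : Finset X) (g : X → ℝ) : ∃ φ : X →ᵇ ℝ, ∀ y ∈ S, φ y = g y := by
  obtain ⟨φ, -, hφ⟩ := exists_norm_eq_domRestrict_eq_of_closed
    (mkOfCompact ⟨fun y : (S : Set X) => g y, continuous_of_discreteTopology⟩)
    S.finite_toSet.isClosed
  exact ⟨φ, fun y hy => congr($hφ ⟨y, hy⟩)⟩

lemma exists_isOpen_eventually_of_mem_nhdsWithin {P X : Type*} [TopologicalSpace P]
    [TopologicalSpace X] {S s : Set (P × X)} {p₀ : P} {A : Finset X}
    (hs : ∀ y ∈ A, s ∈ 𝓝[S] (p₀, y)) :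
    ∃ O, IsOpen O ∧ ↑A ⊆ O ∧ ∀ᶠ p in 𝓝 p₀, ∀ z ∈ O, (p, z) ∈ S → (p, z) ∈ s := by
  choose! u hu using fun y hy => mem_nhdsWithin.1 (hs y hy)
  choose! V W hV hW hpV hyW hVW using fun y hy =>
    isOpen_prod_iff.1 (hu y hy).1 p₀ y (hu y hy).2.1
  refine ⟨⋃ y ∈ A, W y, isOpen_biUnion fun y hy => hW y hy,
    fun y hy => mem_biUnion hy (hyW y hy), ?_⟩
  filter_upwards [(eventually_all_finset A).2 fun y hy => (hV y hy).mem_nhds (hpV y hy)]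
    with p hp z hz hzS
  obtain ⟨y, hy, hzy⟩ := mem_iUnion₂.1 hz
  exact (hu y hy).2.2 ⟨hVW y hy (mk_mem_prod (hp y hy) hzy), hzS⟩

lemma MeasureTheory.ProbabilityMeasure.eventually_measureReal_lt_of_tendsto {Ω ι : Type*}
    [MeasurableSpace Ω] [TopologicalSpace Ω] [OpensMeasurableSpace Ω] [HasOuterApproxClosed Ω]
    {L : Filter ι} {μ : ProbabilityMeasure Ω} {μs : ι → ProbabilityMeasure Ω}
    (hμs : Tendsto μs L (𝓝 μ))
    {F : Set Ω} (hF : IsClosed F) (hμF : (μ : Measure Ω) F = 0) {δ : ℝ} (hδ : 0 < δ) :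
    ∀ᶠ i in L, (μs i : Measure Ω).real F < δ := by
  have hlim : L.limsup (fun i => (μs i : Measure Ω) F) < ENNReal.ofReal δ :=
    (ProbabilityMeasure.limsup_measure_closed_le_of_tendsto hμs hF).trans_lt
      (by simpa [hμF] using hδ)
  filter_upwards [eventually_lt_of_limsup_lt hlim] with i hi
  exact ENNReal.toReal_lt_of_lt_ofReal hi

lemma mem_suppSet_iff {X : Type*} [MeasurableSpace X] {μ : ProbabilityMeasure X} {x : X} :
    x ∈ suppSet μ ↔ (μ : Measure X) {x} ≠ 0 :=
  (ProbabilityMeasure.null_iff_toMeasure_null μ {x}).not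

namespace Pfin

section Atoms

variable {X : Type*} [MeasurableSpace X] [MeasurableSingletonClass X]

lemma exists_finset_measure_compl_eq_zero (μ : Pfin X) :
    ∃ S : Finset X, (μ.1 : Measure X) (↑S)ᶜ = 0 := by
  obtain ⟨S, hS⟩ := μ.2
  refine ⟨S, ?_⟩
  rw [prob_compl_eq_zero_iff S.finite_toSet.measurableSet,
    ← ProbabilityMeasure.ennreal_coeFn_eq_coeFn_toMeasure, hS, ENNReal.coe_one]

lemma suppSet_finite (μ : Pfin X) : (suppSet μ.1).Finite := by
  obtain ⟨S, hS⟩ := exists_finset_measure_compl_eq_zero μ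
  refine S.finite_toSet.subset fun x hx => ?_
  by_contra hxS
  exact mem_suppSet_iff.mp hx (measure_mono_null (by simpa using hxS) hS)

def atoms (μ : Pfin X) : Finset X := (suppSet_finite μ).toFinset

lemma mem_atoms {μ : Pfin X} {x : X} : x ∈ μ.atoms ↔ x ∈ suppSet μ.1 :=
  Set.Finite.mem_toFinset _

lemma measure_compl_atoms (μ : Pfin X) : (μ.1 : Measure X) (↑μ.atoms)ᶜ = 0 := by
  classical
  obtain ⟨S, hS⟩ := exists_finset_measure_compl_eq_zero μ
  have hnull : (μ.1 : Measure X) ↑(S \ μ.atoms) = 0 := by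
    rw [← sum_measure_singleton]
    exact Finset.sum_eq_zero fun x hx => by
      simpa [mem_atoms, mem_suppSet_iff] using (Finset.mem_sdiff.mp hx).2
  refine measure_mono_null (fun x hx => ?_) (measure_union_null hS hnull)
  by_cases hxS : x ∈ S
  · exact Or.inr (by simpa [hxS] using hx)
  · exact Or.inl hxS

lemma ae_mem_atoms (μ : Pfin X) : ∀ᵐ x ∂(μ.1 : Measure X), x ∈ μ.atoms :=
  measure_compl_atoms μ

lemma toMeasure_eq_sum (μ : Pfin X) :
    (μ.1 : Measure X) = ∑ y ∈ μ.atoms, μ.1 {y} • Measure.dirac y := by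
  ext E hE
  have hdirac : ∀ y, (μ.1 {y} • Measure.dirac y) E = (μ.1 : Measure X).restrict E {y} := by
    intro y
    by_cases hy : y ∈ E <;>
      simp [hy, Measure.dirac_apply' _ hE, ProbabilityMeasure.ennreal_coeFn_eq_coeFn_toMeasure]
  rw [Measure.finsetSum_apply, Finset.sum_congr rfl fun y _ => hdirac y, sum_measure_singleton,
    Measure.restrict_apply' hE, Set.inter_comm, measure_inter_conull (measure_compl_atoms μ)]

lemma integrable {E : Type*} [NormedAddCommGroup E] (μ : Pfin X) (f : X → E) :
    Integrable f (μ.1 : Measure X) := by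
  rw [toMeasure_eq_sum]
  exact integrable_finsetSum_smul_dirac _ _ _ f

lemma abs_integral_le_add_measureReal_compl {μ : Pfin X} {h : X → ℝ} {O : Set X}
    (hO : MeasurableSet O) {ε C : ℝ} (hε : 0 ≤ ε) (hC : ∀ z, |h z| ≤ C)
    (hhO : ∀ z ∈ μ.atoms, z ∈ O → |h z| ≤ ε) :
    |∫ z, h z ∂(μ.1 : Measure X)| ≤ ε + C * (μ.1 : Measure X).real Oᶜ := by
  have hbound : ∀ᵐ z ∂(μ.1 : Measure X), |h z| ≤ ε + Oᶜ.indicator (fun _ => C) z := by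
    filter_upwards [ae_mem_atoms μ] with z hz
    by_cases hzO : z ∈ O
    · simpa [hzO] using hhO z hz hzO
    · simpa [hzO] using (hC z).trans (le_add_of_nonneg_left hε)
  calc |∫ z, h z ∂(μ.1 : Measure X)|
      ≤ ∫ z, |h z| ∂(μ.1 : Measure X) := abs_integral_le_integral_abs
    _ ≤ ∫ z, (ε + Oᶜ.indicator (fun _ => C) z) ∂(μ.1 : Measure X) :=
        integral_mono_ae (μ.integrable _) (μ.integrable _) hbound
    _ = ε + C * (μ.1 : Measure X).real Oᶜ := by
        rw [integral_add (integrable_const ε) (μ.integrable _),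
          integral_indicator_const _ hO.compl]
        simp [mul_comm]

variable {Y : Type*} [MeasurableSpace Y]

/-- `∑ aᵢ δ_{F xᵢ}` for `μ = ∑ aᵢ δ_{xᵢ}`. Unlike `Measure.map F μ`, which is `0` unless `F` is
a.e.-measurable, this makes sense for every `F`. -/
def mapAtoms (μ : Pfin X) (F : X → Y) : Measure Y :=
  ∑ y ∈ μ.atoms, μ.1 {y} • Measure.dirac (F y)

lemma integral_mapAtoms [MeasurableSingletonClass Y] {E : Type*} [NormedAddCommGroup E]
    [NormedSpace ℝ E] [CompleteSpace E] (μ : Pfin X) (F : X → Y) (f : Y → E) :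
    ∫ z, f z ∂μ.mapAtoms F = ∫ z, f (F z) ∂(μ.1 : Measure X) := by
  rw [mapAtoms, integral_finsetSum_smul_dirac, μ.toMeasure_eq_sum, integral_finsetSum_smul_dirac]

section Representation

variable {μ : Pfin X} {n : ℕ} {a : Fin n → ℝ≥0} {x : Fin n → X}

lemma apply_singleton_of_eq_sum [DecidableEq X]
    (hμ : (μ.1 : Measure X) = ∑ i, a i • Measure.dirac (x i)) (y : X) :
    μ.1 {y} = ∑ i with x i = y, a i := by
  apply ENNReal.coe_injective
  rw [ProbabilityMeasure.ennreal_coeFn_eq_coeFn_toMeasure, hμ, ENNReal.ofNNReal_finsetSum,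
    Measure.finsetSum_apply, Finset.sum_filter]
  refine Finset.sum_congr rfl fun i _ => ?_
  by_cases hi : x i = y <;> simp [hi]

lemma mem_atoms_of_eq_sum (hμ : (μ.1 : Measure X) = ∑ i, a i • Measure.dirac (x i))
    (ha : ∀ i, 0 < a i) (i : Fin n) : x i ∈ μ.atoms := by
  classical
  rw [mem_atoms, suppSet, Set.mem_ofPred_eq, apply_singleton_of_eq_sum hμ]
  exact (Finset.sum_pos' (fun j _ => (ha j).le) ⟨i, by simp, ha i⟩).ne'

lemma mapAtoms_eq_sum (hμ : (μ.1 : Measure X) = ∑ i, a i • Measure.dirac (x i))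
    (ha : ∀ i, 0 < a i) (F : X → Y) :
    μ.mapAtoms F = ∑ i, a i • Measure.dirac (F (x i)) := by
  classical
  rw [← Finset.sum_fiberwise_of_maps_to fun i _ => mem_atoms_of_eq_sum hμ ha i]
  refine Finset.sum_congr rfl fun y _ => ?_
  rw [apply_singleton_of_eq_sum hμ, Finset.sum_smul]
  exact Finset.sum_congr rfl fun i hi => by rw [(Finset.mem_filter.1 hi).2]

end Representation

lemma exists_eq_sum (μ : Pfin X) : ∃ (n : ℕ) (a : Fin n → ℝ≥0) (x : Fin n → X),
    (∀ i, 0 < a i) ∧ (μ.1 : Measure X) = ∑ i, a i • Measure.dirac (x i) := by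
  let e := μ.atoms.equivFin
  refine ⟨_, fun i => μ.1 {(e.symm i : X)}, fun i => e.symm i,
    fun i => pos_iff_ne_zero.2 (mem_atoms.1 (e.symm i).2), ?_⟩
  rw [μ.toMeasure_eq_sum, ← Finset.sum_coe_sort μ.atoms]
  exact (e.symm.sum_comp fun y => μ.1 {(y : X)} • Measure.dirac (y : X)).symm

end Atoms

section WeakConvergence

variable {X P : Type*} [MetricSpace X] [MeasurableSpace X] [BorelSpace X] [TopologicalSpace P]
  {μ : P → Pfin X}

lemma tendsto_integral_zero_of_tendsto_nhdsWithin {p₀ : P}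
    (hμ : ContinuousAt (fun p => (μ p).1) p₀) {h : P × X → ℝ} {C : ℝ} (hC : ∀ q, |h q| ≤ C)
    (hh : ∀ y ∈ (μ p₀).atoms, Tendsto h (𝓝[{q | q.2 ∈ (μ q.1).atoms}] (p₀, y)) (𝓝 0)) :
    Tendsto (fun p => ∫ z, h (p, z) ∂((μ p).1 : Measure X)) (𝓝 p₀) (𝓝 0) := by
  obtain ⟨x⟩ := (μ p₀).1.nonempty
  have hC0 : 0 ≤ C := (abs_nonneg _).trans (hC (p₀, x))
  rw [Metric.tendsto_nhds]
  intro ε hε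
  obtain ⟨O, hO, hAO, hsmall⟩ := exists_isOpen_eventually_of_mem_nhdsWithin fun y hy =>
    Metric.tendsto_nhds.1 (hh y hy) (ε / 2) (half_pos hε)
  have hO₀ : ((μ p₀).1 : Measure X) Oᶜ = 0 :=
    measure_mono_null (compl_subset_compl.2 hAO) (measure_compl_atoms _)
  have hη : 0 < ε / (2 * (C + 1)) := by positivity
  filter_upwards [hsmall, ProbabilityMeasure.eventually_measureReal_lt_of_tendsto hμ
    hO.isClosed_compl hO₀ hη] with p hp hpO
  have hCη : C * ((μ p).1 : Measure X).real Oᶜ < ε / 2 := by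
    calc C * ((μ p).1 : Measure X).real Oᶜ ≤ C * (ε / (2 * (C + 1))) := by gcongr
      _ < ε / 2 := by
        rw [mul_div_assoc', div_lt_div_iff₀ (by positivity) two_pos]
        nlinarith
  rw [Real.dist_eq, sub_zero]
  calc |∫ z, h (p, z) ∂((μ p).1 : Measure X)|
      ≤ ε / 2 + C * ((μ p).1 : Measure X).real Oᶜ :=
        abs_integral_le_add_measureReal_compl hO.measurableSet (half_pos hε).le
          (fun z => hC (p, z)) fun z hz hzO => by simpa [Real.dist_eq] using (hp z hzO hz).le
    _ < ε := by linarith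

theorem continuousAt_integral_of_continuousWithinAt {p₀ : P}
    (hμ : ContinuousAt (fun p => (μ p).1) p₀) {g : P × X → ℝ} {C : ℝ} (hC : ∀ q, |g q| ≤ C)
    (hg : ∀ y ∈ (μ p₀).atoms, ContinuousWithinAt g {q | q.2 ∈ (μ q.1).atoms} (p₀, y)) :
    ContinuousAt (fun p => ∫ z, g (p, z) ∂((μ p).1 : Measure X)) p₀ := by
  obtain ⟨φ, hφ⟩ := exists_boundedContinuous_eqOn_finset (μ p₀).atoms fun y => g (p₀, y)
  have hsmall :
      Tendsto (fun p => ∫ z, (g (p, z) - φ z) ∂((μ p).1 : Measure X)) (𝓝 p₀) (𝓝 0) := by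
    refine tendsto_integral_zero_of_tendsto_nhdsWithin hμ (h := fun q => g q - φ q.2)
      (C := C + ‖φ‖) (fun q => ?_) fun y hy => ?_
    · exact (abs_sub _ _).trans (add_le_add (hC q) (by simpa using φ.norm_coe_le_norm q.2))
    · have := ((hg y hy).sub (φ.continuous.comp continuous_snd).continuousWithinAt).tendsto
      simp only [Pi.sub_apply, Function.comp_apply, hφ y hy, sub_self] at this
      exact this
  have hweak := ProbabilityMeasure.tendsto_iff_forall_integral_tendsto.1 hμ φ
  have hsplit : ∀ p, ∫ z, g (p, z) ∂((μ p).1 : Measure X) =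
      ∫ z, (g (p, z) - φ z) ∂((μ p).1 : Measure X) + ∫ z, φ z ∂((μ p).1 : Measure X) := by
    intro p
    rw [integral_sub ((μ p).integrable _) ((μ p).integrable _), sub_add_cancel]
  have hlimit :
      ∫ z, g (p₀, z) ∂((μ p₀).1 : Measure X) = ∫ z, φ z ∂((μ p₀).1 : Measure X) := by
    refine integral_congr_ae ?_
    filter_upwards [ae_mem_atoms (μ p₀)] with z hz using (hφ z hz).symm
  unfold ContinuousAt
  simp_rw [hlimit, hsplit]
  simpa using hsmall.add hweak

theorem continuous_of_eq_mapAtoms (hμ : Continuous fun p => (μ p).1)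
    {F : P × X → X} (hF : ContinuousOn F {q | q.2 ∈ (μ q.1).atoms})
    {ν : P → ProbabilityMeasure X} (hν : ∀ p, (ν p : Measure X) = (μ p).mapAtoms (F ⟨p, ·⟩)) :
    Continuous ν := by
  refine ProbabilityMeasure.continuous_iff_forall_continuous_integral.2 fun f => ?_
  simp_rw [hν, integral_mapAtoms]
  refine continuous_iff_continuousAt.2 fun p₀ =>
    continuousAt_integral_of_continuousWithinAt hμ.continuousAt (g := fun q => f (F q))
      (C := ‖f‖) (fun q => by simpa using f.norm_coe_le_norm (F q)) fun y hy => ?_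
  exact f.continuous.continuousAt.comp_continuousWithinAt (hF _ hy)

end WeakConvergence

end Pfin

theorem support_homotopy_induces_continuous_map_general
    {X : Type*} [MetricSpace X] [MeasurableSpace X] [BorelSpace X]
    (U : Set (Pfin X)) (Q : Set (X × ↥U))
    (hQ : Q = {p : X × ↥U | p.1 ∈ suppSet ((p.2 : Pfin X)).1})
    (H : C(↥Q × I, X))
    (hH : ∀ (t : I) (μ : ↥U) (n : ℕ) (a : Fin n → ℝ≥0) (x : Fin n → X)
      (hx : ∀ i, ((x i, μ) : X × ↥U) ∈ Q),
      (∀ i, 0 < a i) →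
      (((μ : Pfin X)).1 : Measure X) = ∑ i, (a i) • Measure.dirac (x i) →
      ∃ ν : ↥U, (((ν : Pfin X)).1 : Measure X) =
        ∑ i, (a i) • Measure.dirac (H (⟨(x i, μ), hx i⟩, t))) :
    ∃ Htilde : C(↥U × I, ↥U),
      ∀ (μ : ↥U) (t : I) (n : ℕ) (a : Fin n → ℝ≥0) (x : Fin n → X)
        (hx : ∀ i, ((x i, μ) : X × ↥U) ∈ Q),
        (∀ i, 0 < a i) →
        (((μ : Pfin X)).1 : Measure X) = ∑ i, (a i) • Measure.dirac (x i) →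
        (((Htilde (μ, t) : Pfin X)).1 : Measure X) =
          ∑ i, (a i) • Measure.dirac (H (⟨(x i, μ), hx i⟩, t)) := by
  classical
  have hQ_iff : ∀ {z : X} {μ : ↥U}, (z, μ) ∈ Q ↔ z ∈ (μ : Pfin X).atoms := by
    intro z μ
    rw [hQ, Pfin.mem_atoms]
    rfl
  let S : Set ((↥U × I) × X) := {q | q.2 ∈ (q.1.1 : Pfin X).atoms}
  let F : (↥U × I) × X → X := fun q =>
    if h : q ∈ S then H (⟨(q.2, q.1.1), hQ_iff.2 h⟩, q.1.2) else q.2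
  have hF : ∀ {μ t z} (h : (z, μ) ∈ Q), F ((μ, t), z) = H (⟨(z, μ), h⟩, t) :=
    fun h => dif_pos (hQ_iff.1 h)
  have hFcont : ContinuousOn F S :=
    continuousOn_dite_of_continuous
      (f := fun q : S => H (⟨(q.1.2, q.1.1.1), hQ_iff.2 q.2⟩, q.1.1.2)) (by fun_prop) _
  have hexists : ∀ p : ↥U × I, ∃ ν : ↥U, ((ν : Pfin X).1 : Measure X) =
      (p.1 : Pfin X).mapAtoms (F ⟨p, ·⟩) := by
    rintro ⟨μ, t⟩
    obtain ⟨n, a, x, ha, hμ⟩ := (μ : Pfin X).exists_eq_sum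
    have hx : ∀ i, (x i, μ) ∈ Q := fun i => hQ_iff.2 (Pfin.mem_atoms_of_eq_sum hμ ha i)
    obtain ⟨ν, hν⟩ := hH t μ n a x hx ha hμ
    refine ⟨ν, hν.trans ?_⟩
    simp only [Pfin.mapAtoms_eq_sum hμ ha, hF (hx _)]
  choose G hG using hexists
  have hGcont : Continuous G := by
    have hμ : Continuous fun p : ↥U × I => (p.1 : Pfin X).1 := by fun_prop
    exact (IsInducing.subtypeVal.comp IsInducing.subtypeVal).continuous_iff.2
      (Pfin.continuous_of_eq_mapAtoms hμ hFcont hG)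
  refine ⟨⟨G, hGcont⟩, fun μ t n a x hx ha hμ => ?_⟩
  simp only [ContinuousMap.coe_mk, hG, Pfin.mapAtoms_eq_sum hμ ha, hF (hx _)]

/-- Let `X` be a compact metric space, `U ⊆ P^fin(X)`, and
`Q(X,U) = {(x,μ) : x ∈ supp μ}`. If `H : Q(X,U) × [0,1] → X` is a continuous support
homotopy in `U` (i.e. `Σ aᵢ δ_{H(xᵢ,μ,t)} ∈ U` whenever `μ = Σ aᵢ δ_{xᵢ} ∈ U` with all
`aᵢ > 0`), then the induced map `H̃ : U × [0,1] → U`,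
`H̃(μ,t) = Σ aᵢ δ_{H(xᵢ,μ,t)}` for `μ = Σ aᵢ δ_{xᵢ}` with all `aᵢ > 0`, is a
well-defined continuous map. -/
theorem support_homotopy_induces_continuous_map
    {X : Type*} [MetricSpace X] [CompactSpace X] [MeasurableSpace X] [BorelSpace X]
    (U : Set (Pfin X)) (Q : Set (X × ↥U))
    (hQ : Q = {p : X × ↥U | p.1 ∈ suppSet ((p.2 : Pfin X)).1})
    (H : C(↥Q × I, X))
    (hH : ∀ (t : I) (μ : ↥U) (n : ℕ) (a : Fin n → ℝ≥0) (x : Fin n → X)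
      (hx : ∀ i, ((x i, μ) : X × ↥U) ∈ Q),
      (∀ i, 0 < a i) →
      (((μ : Pfin X)).1 : Measure X) = ∑ i, (a i) • Measure.dirac (x i) →
      ∃ ν : ↥U, (((ν : Pfin X)).1 : Measure X) =
        ∑ i, (a i) • Measure.dirac (H (⟨(x i, μ), hx i⟩, t))) :
    ∃ Htilde : C(↥U × I, ↥U),
      ∀ (μ : ↥U) (t : I) (n : ℕ) (a : Fin n → ℝ≥0) (x : Fin n → X)
        (hx : ∀ i, ((x i, μ) : X × ↥U) ∈ Q),
        (∀ i, 0 < a i) →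
        (((μ : Pfin X)).1 : Measure X) = ∑ i, (a i) • Measure.dirac (x i) →
        (((Htilde (μ, t) : Pfin X)).1 : Measure X) =
          ∑ i, (a i) • Measure.dirac (H (⟨(x i, μ), hx i⟩, t)) :=
  support_homotopy_induces_continuous_map_general U Q hQ H hH
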